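/- arXiv:2203.16890 — 2 statements merged into one kernel-verified Lean document; each statement's English description precedes it below -/
import Mathlib

section
/- Uniqueness of falsity (semantic form): Let n ≥ 2 and suppose valuations of formulas (arbitrary on atoms, each connective interpreted by some fixed truth function) are given. If indices j and k are both falsities — i.e., for every valuation σ, every index i, every formula φ, and all finite sets Γ, Δ of located formulas, σ satisfies Γ : Δ, (N_i φ, j) iff σ satisfies Γ : Δ, (φ, i), and the same condition holds with k in place of j — then j = k. -/
/-- Formulas: atoms and unary connectives `N i` for `i : Fin n`
    (the connective `N_{i+1}` of the paper, locating values in `Fin n`). -/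
inductive Formula (n : ℕ) : Type
  | atom : ℕ → Formula n
  | N : Fin n → Formula n → Formula n
  deriving DecidableEq

/-- Located formulas: a formula together with a truth value (location). -/
abbrev LForm (n : ℕ) := Formula n × Fin n

/-- `σ` satisfies the located sequent `Γ : Δ`. -/
def Satisfies {n : ℕ} (σ : Formula n → Fin n) (Γ Δ : Finset (LForm n)) : Prop :=
  (∀ p ∈ Γ, σ p.1 = p.2) → ∃ p ∈ Δ, σ p.1 = p.2

/-- `σ` obeys the truth table (5.27): `σ(N_i φ) = v₁` if `σ(φ) ≠ v_i`,
    and `σ(N_i φ) = v_n` if `σ(φ) = v_i`. -/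
def ObeysTT {n : ℕ} (hn : 2 ≤ n) (σ : Formula n → Fin n) : Prop :=
  ∀ (i : Fin n) (φ : Formula n),
    (σ φ ≠ i → σ (Formula.N i φ) = ⟨0, by omega⟩) ∧
    (σ φ = i → σ (Formula.N i φ) = ⟨n - 1, by omega⟩)

/-- The set of located formulas `{(φ, m) | m ≠ i}`. -/
def locAll {n : ℕ} (φ : Formula n) (i : Fin n) : Finset (LForm n) :=
  (Finset.univ.erase i).image (fun m => (φ, m))

/-- `σ` interprets each connective `N i` by the truth function `f i`. -/
def Compositional {n : ℕ} (f : Fin n → Fin n → Fin n) (σ : Formula n → Fin n) : Prop :=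
  ∀ (i : Fin n) (φ : Formula n), σ (Formula.N i φ) = f i (σ φ)

/-- `j` is a falsity: condition `(N_f)` holds semantically for all valuations
    compositional w.r.t. `f`. -/
def IsFalsity {n : ℕ} (f : Fin n → Fin n → Fin n) (j : Fin n) : Prop :=
  ∀ σ : Formula n → Fin n, Compositional f σ →
    ∀ (i : Fin n) (φ : Formula n) (Γ Δ : Finset (LForm n)),
      Satisfies σ Γ (insert (Formula.N i φ, j) Δ) ↔ Satisfies σ Γ (insert (φ, i) Δ)

/-! A falsity `j` pins down the truth tables completely at the value `j`: testing the
one-formula sequent `∅ : (N_i p, j)` on an atom `p` valued `a` shows `f i a = j ↔ a = i`.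
Hence `j = f j j = k`. -/

def Formula.eval {n : ℕ} (f : Fin n → Fin n → Fin n) (v : ℕ → Fin n) : Formula n → Fin n
  | .atom a => v a
  | .N i φ => f i (φ.eval f v)

lemma Formula.compositional_eval {n : ℕ} (f : Fin n → Fin n → Fin n) (v : ℕ → Fin n) :
    Compositional f (Formula.eval f v) :=
  fun _ _ => rfl

lemma satisfies_empty_singleton_iff {n : ℕ} (σ : Formula n → Fin n) (p : LForm n) :
    Satisfies σ ∅ {p} ↔ σ p.1 = p.2 := by
  simp [Satisfies]

lemma IsFalsity.apply_eq_iff {n : ℕ} {f : Fin n → Fin n → Fin n} {j : Fin n}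
    (hj : IsFalsity f j) (i a : Fin n) : f i a = j ↔ a = i := by
  have h := hj (Formula.eval f fun _ => a) (Formula.compositional_eval f _) i (.atom 0) ∅ ∅
  simpa only [insert_empty_eq, satisfies_empty_singleton_iff, Formula.eval] using h

theorem uniqueness_of_falsity_general {n : ℕ} (f : Fin n → Fin n → Fin n)
    (j k : Fin n) (hj : IsFalsity f j) (hk : IsFalsity f k) : j = k :=
  calc j = f j j := ((hj.apply_eq_iff j j).mpr rfl).symm
    _ = k := (hk.apply_eq_iff j j).mpr rfl

/-- Uniqueness of falsity (semantic form). -/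
theorem uniqueness_of_falsity {n : ℕ} (hn : 2 ≤ n) (f : Fin n → Fin n → Fin n)
    (j k : Fin n) (hj : IsFalsity f j) (hk : IsFalsity f k) : j = k :=
  uniqueness_of_falsity_general f j k hj hk
end

section
/- Soundness of the introduction/elimination pair for N_k at v₁: for every n ≥ 2, every valuation σ, every index k, every formula φ, and all finite sets Γ, Δ of located formulas: σ satisfies Γ : Δ, (N_k φ, 1) if and only if σ satisfies Γ : Δ ∪ {(φ, j) | j ≠ k}. (Joint soundness of the rules (N_k I₁) and (N_k E₁).) -/
section

variable {n : ℕ} {σ : Formula n → Fin n}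

theorem satisfies_congr_right {Γ Δ Δ' : Finset (LForm n)}
    (h : (∃ p ∈ Δ, σ p.1 = p.2) ↔ ∃ p ∈ Δ', σ p.1 = p.2) :
    Satisfies σ Γ Δ ↔ Satisfies σ Γ Δ' :=
  imp_congr_right fun _ => h

theorem exists_mem_locAll_iff (φ : Formula n) (i : Fin n) :
    (∃ p ∈ locAll φ i, σ p.1 = p.2) ↔ σ φ ≠ i := by
  simp [locAll]

theorem ObeysTT.N_eq_first_iff {hn : 2 ≤ n} (hσ : ObeysTT hn σ) (i : Fin n)
    (φ : Formula n) : σ (Formula.N i φ) = ⟨0, by omega⟩ ↔ σ φ ≠ i := by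
  refine ⟨fun h hφ => ?_, (hσ i φ).1⟩
  have hlast : (⟨n - 1, by omega⟩ : Fin n) = ⟨0, by omega⟩ := (hσ i φ).2 hφ ▸ h
  have : n - 1 = 0 := congrArg Fin.val hlast
  omega

end

/-- Joint soundness of the rules `(N_k I₁)` and `(N_k E₁)`. -/
theorem NI1_NE1_sound {n : ℕ} (hn : 2 ≤ n) (σ : Formula n → Fin n)
    (hσ : ObeysTT hn σ) (k : Fin n) (φ : Formula n) (Γ Δ : Finset (LForm n)) :
    Satisfies σ Γ (insert (Formula.N k φ, (⟨0, by omega⟩ : Fin n)) Δ) ↔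
      Satisfies σ Γ (Δ ∪ locAll φ k) := by
  apply satisfies_congr_right
  simp only [Finset.exists_mem_insert, Finset.mem_union, or_and_right, exists_or,
    exists_mem_locAll_iff, hσ.N_eq_first_iff, or_comm]
end
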